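/- arXiv:2603.03955 — 2 statements merged into one kernel-verified Lean document; each statement's English description precedes it below -/
import Mathlib

section
/- Let μ and π' be probability distributions on a finite action set with all probabilities positive, let ρ'(a) = π'(a)/μ(a), and suppose the KL divergence D_KL(μ ∥ π') ≤ δ. Then for any τ > 0, P_{a∼π'}(|log ρ'(a)| ≥ τ) ≤ 2e^{-τ} + √(δ/2). -/
open Finset Real


lemma hasDerivAt_G (y : ℝ) (hy : 0 < y) :
    HasDerivAt (fun z : ℝ => (z + 1) * Real.log z - 2 * (z - 1))
      (Real.log y + y⁻¹ - 1) y := by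
  have h1 : HasDerivAt (fun z : ℝ => (z + 1) * Real.log z - 2 * (z - 1))
      (1 * Real.log y + (y + 1) * y⁻¹ - 2 * 1) y :=
    (((hasDerivAt_id y).add_const 1).mul (Real.hasDerivAt_log hy.ne')).sub
      (((hasDerivAt_id y).sub_const 1).const_mul 2)
  convert h1 using 1
  field_simp
  ring

lemma G_mono : MonotoneOn (fun z : ℝ => (z + 1) * Real.log z - 2 * (z - 1)) (Set.Ioi 0) := by
  apply monotoneOn_of_deriv_nonneg (convex_Ioi 0)
  · intro y hy
    exact (hasDerivAt_G y hy).differentiableAt.continuousAt.continuousWithinAt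
  · rw [interior_Ioi]
    intro y hy
    exact (hasDerivAt_G y hy).differentiableAt.differentiableWithinAt
  · rw [interior_Ioi]
    intro y hy
    rw [(hasDerivAt_G y hy).deriv]
    have hlog : Real.log y⁻¹ ≤ y⁻¹ - 1 := Real.log_le_sub_one_of_pos (inv_pos.mpr hy)
    rw [Real.log_inv] at hlog
    linarith

lemma G_nonneg {x : ℝ} (hx : 1 ≤ x) : 0 ≤ (x + 1) * Real.log x - 2 * (x - 1) := by
  have := G_mono (Set.mem_Ioi.mpr one_pos) (Set.mem_Ioi.mpr (lt_of_lt_of_le one_pos hx)) hx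
  simpa using this

lemma G_nonpos {x : ℝ} (hx0 : 0 < x) (hx : x ≤ 1) :
    (x + 1) * Real.log x - 2 * (x - 1) ≤ 0 := by
  have := G_mono (Set.mem_Ioi.mpr hx0) (Set.mem_Ioi.mpr one_pos) hx
  simpa using this

lemma hasDerivAt_F (y : ℝ) (hy : 0 < y) :
    HasDerivAt (fun z : ℝ => 2 * (z + 2) * (z * Real.log z - z + 1) - 3 * (z - 1) ^ 2)
      (4 * ((y + 1) * Real.log y - 2 * (y - 1))) y := by
  have hxl : HasDerivAt (fun z : ℝ => z * Real.log z) (1 * Real.log y + y * y⁻¹) y :=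
    (hasDerivAt_id y).mul (Real.hasDerivAt_log hy.ne')
  have h1 : HasDerivAt (fun z : ℝ => z * Real.log z - z + 1)
      (1 * Real.log y + y * y⁻¹ - 1) y := (hxl.sub (hasDerivAt_id y)).add_const 1
  have h2 : HasDerivAt (fun z : ℝ => 2 * (z + 2)) 2 y := by
    simpa using ((hasDerivAt_id y).add_const 2).const_mul 2
  have h3 : HasDerivAt (fun z : ℝ => 3 * (z - 1) ^ 2) (3 * (2 * (y - 1))) y := by
    simpa using (((hasDerivAt_id y).sub_const 1).pow 2).const_mul 3
  have h4 := (h2.mul h1).sub h3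
  refine h4.congr_deriv ?_
  have : y * y⁻¹ = 1 := mul_inv_cancel₀ hy.ne'
  rw [this]
  ring

lemma key_ineq {x : ℝ} (hx : 0 < x) :
    3 * (x - 1) ^ 2 ≤ 2 * (x + 2) * (x * Real.log x - x + 1) := by
  set F : ℝ → ℝ := fun z => 2 * (z + 2) * (z * Real.log z - z + 1) - 3 * (z - 1) ^ 2 with hF
  have hF1 : F 1 = 0 := by simp [hF]
  have goal : 0 ≤ F x := by
    rcases le_total 1 x with h | h
    · have hmono : MonotoneOn F (Set.Ici 1) := by
        apply monotoneOn_of_deriv_nonneg (convex_Ici 1)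
        · intro y hy
          have hy0 : (0:ℝ) < y := lt_of_lt_of_le one_pos hy
          exact (hasDerivAt_F y hy0).differentiableAt.continuousAt.continuousWithinAt
        · rw [interior_Ici]
          intro y hy
          exact (hasDerivAt_F y (lt_trans one_pos hy)).differentiableAt.differentiableWithinAt
        · rw [interior_Ici]
          intro y hy
          rw [(hasDerivAt_F y (lt_trans one_pos hy)).deriv]
          have := G_nonneg (le_of_lt hy)
          linarith
      have := hmono (Set.mem_Ici.mpr le_rfl) (Set.mem_Ici.mpr h) h
      rw [hF1] at this; exact this
    · have hanti : AntitoneOn F (Set.Ioc 0 1) := by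
        apply antitoneOn_of_deriv_nonpos (convex_Ioc 0 1)
        · intro y hy
          exact (hasDerivAt_F y hy.1).differentiableAt.continuousAt.continuousWithinAt
        · rw [interior_Ioc]
          intro y hy
          exact (hasDerivAt_F y hy.1).differentiableAt.differentiableWithinAt
        · rw [interior_Ioc]
          intro y hy
          rw [(hasDerivAt_F y hy.1).deriv]
          have := G_nonpos hy.1 (le_of_lt hy.2)
          linarith
      have := hanti (Set.mem_Ioc.mpr ⟨hx, h⟩) (Set.mem_Ioc.mpr ⟨one_pos, le_rfl⟩) h
      rw [hF1] at this; exact this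
  simp only [hF] at goal
  linarith


lemma pinsker_sum {A : Type*} [Fintype A]
    (μ π' : A → ℝ) (hμpos : ∀ a, 0 < μ a) (hπpos : ∀ a, 0 < π' a)
    (hμsum : ∑ a, μ a = 1) (hπsum : ∑ a, π' a = 1)
    (δ : ℝ) (hKL : ∑ a, μ a * Real.log (μ a / π' a) ≤ δ) :
    (∑ a, |μ a - π' a|) ^ 2 ≤ 2 * δ := by
  set x : A → ℝ := fun a => μ a / π' a with hx
  have hxpos : ∀ a, 0 < x a := fun a => div_pos (hμpos a) (hπpos a)
  have hμx : ∀ a, μ a = π' a * x a := fun a => by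
    rw [hx, mul_comm, div_mul_cancel₀ _ (hπpos a).ne']
  set P : A → ℝ := fun a => π' a * (3 * (x a - 1) ^ 2 / (2 * (x a + 2))) with hP
  set Q : A → ℝ := fun a => π' a * (2 * (x a + 2) / 3) with hQ
  have hPnn : ∀ a, 0 ≤ P a := fun a => by
    apply mul_nonneg (hπpos a).le
    apply div_nonneg (by positivity)
    have := hxpos a; linarith
  have hQnn : ∀ a, 0 ≤ Q a := fun a => by
    apply mul_nonneg (hπpos a).le
    have := hxpos a; linarith
  have hsumx : ∑ a, π' a * x a = 1 := by
    rw [← hμsum]; exact Finset.sum_congr rfl fun a _ => (hμx a).symm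
  have hsumQ : ∑ a, Q a = 2 := by
    have h : ∀ a, Q a = (2/3) * (π' a * x a) + (4/3) * π' a := fun a => by
      simp only [hQ]; ring
    rw [Finset.sum_congr rfl fun a _ => h a, Finset.sum_add_distrib,
      ← Finset.mul_sum, ← Finset.mul_sum, hsumx, hπsum]
    norm_num
  have hsumP : ∑ a, P a ≤ δ := by
    have hKL' : ∑ a, π' a * (x a * Real.log (x a) - x a + 1)
        = ∑ a, μ a * Real.log (μ a / π' a) := by
      have h1 : ∀ a, π' a * (x a * Real.log (x a) - x a + 1)
          = μ a * Real.log (μ a / π' a) - π' a * x a + π' a := by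
        intro a
        have e1 : π' a * x a = μ a := (hμx a).symm
        calc π' a * (x a * Real.log (x a) - x a + 1)
            = (π' a * x a) * Real.log (x a) - π' a * x a + π' a := by ring
          _ = μ a * Real.log (μ a / π' a) - π' a * x a + π' a := by
              rw [e1]
      rw [Finset.sum_congr rfl fun a _ => h1 a, Finset.sum_add_distrib,
        Finset.sum_sub_distrib, hsumx, hπsum]
      ring
    calc ∑ a, P a ≤ ∑ a, π' a * (x a * Real.log (x a) - x a + 1) := by
          apply Finset.sum_le_sum
          intro a _
          apply mul_le_mul_of_nonneg_left _ (hπpos a).le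
          have hkey := key_ineq (hxpos a)
          have h2 : (0:ℝ) < 2 * (x a + 2) := by have := hxpos a; linarith
          rw [div_le_iff₀ h2]
          calc 3 * (x a - 1) ^ 2 ≤ 2 * (x a + 2) * (x a * Real.log (x a) - x a + 1) := hkey
            _ = (x a * Real.log (x a) - x a + 1) * (2 * (x a + 2)) := by ring
      _ = ∑ a, μ a * Real.log (μ a / π' a) := hKL'
      _ ≤ δ := hKL
  have habs : ∀ a, |μ a - π' a| = Real.sqrt (P a) * Real.sqrt (Q a) := by
    intro a
    rw [← Real.sqrt_mul (hPnn a)]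
    have hx2 : x a + 2 ≠ 0 := by have := hxpos a; linarith
    have h : P a * Q a = (μ a - π' a) ^ 2 := by
      have e1 : π' a * x a = μ a := (hμx a).symm
      have h2 : P a * Q a = (π' a * x a - π' a) ^ 2 := by
        simp only [hP, hQ]
        field_simp
      rw [h2, e1]
    rw [h, Real.sqrt_sq_eq_abs]
  calc (∑ a, |μ a - π' a|) ^ 2
      = (∑ a, Real.sqrt (P a) * Real.sqrt (Q a)) ^ 2 := by
        rw [Finset.sum_congr rfl fun a _ => habs a]
    _ ≤ (∑ a, Real.sqrt (P a) ^ 2) * ∑ a, Real.sqrt (Q a) ^ 2 :=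
        Finset.sum_mul_sq_le_sq_mul_sq _ _ _
    _ = (∑ a, P a) * ∑ a, Q a := by
        rw [Finset.sum_congr rfl fun a _ => Real.sq_sqrt (hPnn a),
          Finset.sum_congr rfl fun a _ => Real.sq_sqrt (hQnn a)]
    _ ≤ δ * 2 := by
        apply mul_le_mul hsumP (le_of_eq hsumQ) (by rw [hsumQ]; norm_num)
        exact le_trans (Finset.sum_nonneg fun a _ => hPnn a) hsumP
    _ = 2 * δ := by ring

theorem two_sided_tail_bound {A : Type*} [Fintype A]
    (μ π' : A → ℝ) (hμpos : ∀ a, 0 < μ a) (hπpos : ∀ a, 0 < π' a)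
    (hμsum : ∑ a, μ a = 1) (hπsum : ∑ a, π' a = 1)
    (δ : ℝ) (hKL : ∑ a, μ a * Real.log (μ a / π' a) ≤ δ)
    (τ : ℝ) (hτ : 0 < τ) :
    ∑ a ∈ Finset.univ.filter (fun a => τ ≤ |Real.log (π' a / μ a)|), π' a
      ≤ 2 * Real.exp (-τ) + Real.sqrt (δ / 2) := by
  classical
  set S1 : Finset A := Finset.univ.filter (fun a => Real.log (π' a / μ a) ≤ -τ) with hS1
  set S2 : Finset A := Finset.univ.filter (fun a => τ ≤ Real.log (π' a / μ a)) with hS2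
  have hsub : Finset.univ.filter (fun a => τ ≤ |Real.log (π' a / μ a)|) ⊆ S1 ∪ S2 := by
    intro a ha
    simp only [Finset.mem_filter, Finset.mem_univ, true_and] at ha
    simp only [hS1, hS2, Finset.mem_union, Finset.mem_filter, Finset.mem_univ, true_and]
    rcases le_or_gt (Real.log (π' a / μ a)) 0 with h | h
    · left; rw [abs_of_nonpos h] at ha; linarith
    · right; rw [abs_of_pos h] at ha; linarith
  have hdisj : Disjoint S1 S2 := by
    rw [Finset.disjoint_left]
    intro a h1 h2
    simp only [hS1, hS2, Finset.mem_filter, Finset.mem_univ, true_and] at h1 h2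
    linarith
  have step1 : ∑ a ∈ Finset.univ.filter (fun a => τ ≤ |Real.log (π' a / μ a)|), π' a
      ≤ ∑ a ∈ S1, π' a + ∑ a ∈ S2, π' a := by
    rw [← Finset.sum_union hdisj]
    exact Finset.sum_le_sum_of_subset_of_nonneg hsub fun a _ _ => (hπpos a).le
  have hb1 : ∑ a ∈ S1, π' a ≤ Real.exp (-τ) := by
    have h1 : ∀ a ∈ S1, π' a ≤ Real.exp (-τ) * μ a := by
      intro a ha
      simp only [hS1, Finset.mem_filter, Finset.mem_univ, true_and] at ha
      have h2 := (Real.log_le_iff_le_exp (div_pos (hπpos a) (hμpos a))).mp ha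
      rw [div_le_iff₀ (hμpos a)] at h2
      linarith [h2]
    calc ∑ a ∈ S1, π' a ≤ ∑ a ∈ S1, Real.exp (-τ) * μ a := Finset.sum_le_sum h1
      _ = Real.exp (-τ) * ∑ a ∈ S1, μ a := by rw [Finset.mul_sum]
      _ ≤ Real.exp (-τ) * 1 := by
          apply mul_le_mul_of_nonneg_left _ (Real.exp_pos _).le
          rw [← hμsum]
          exact Finset.sum_le_sum_of_subset_of_nonneg (Finset.subset_univ _)
            fun a _ _ => (hμpos a).le
      _ = Real.exp (-τ) := mul_one _
  have hb2mu : ∑ a ∈ S2, μ a ≤ Real.exp (-τ) := by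
    have h1 : ∀ a ∈ S2, μ a ≤ Real.exp (-τ) * π' a := by
      intro a ha
      simp only [hS2, Finset.mem_filter, Finset.mem_univ, true_and] at ha
      have hlogeq : Real.log (μ a / π' a) = -Real.log (π' a / μ a) := by
        rw [← Real.log_inv]
        congr 1
        rw [inv_div]
      have hlog : Real.log (μ a / π' a) ≤ -τ := by rw [hlogeq]; linarith
      have h2 := (Real.log_le_iff_le_exp (div_pos (hμpos a) (hπpos a))).mp hlog
      rw [div_le_iff₀ (hπpos a)] at h2
      linarith [h2]
    calc ∑ a ∈ S2, μ a ≤ ∑ a ∈ S2, Real.exp (-τ) * π' a := Finset.sum_le_sum h1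
      _ = Real.exp (-τ) * ∑ a ∈ S2, π' a := by rw [Finset.mul_sum]
      _ ≤ Real.exp (-τ) * 1 := by
          apply mul_le_mul_of_nonneg_left _ (Real.exp_pos _).le
          rw [← hπsum]
          exact Finset.sum_le_sum_of_subset_of_nonneg (Finset.subset_univ _)
            fun a _ _ => (hπpos a).le
      _ = Real.exp (-τ) := mul_one _
  have hpinsker := pinsker_sum μ π' hμpos hπpos hμsum hπsum δ hKL
  have hsumabs_nn : 0 ≤ ∑ a, |μ a - π' a| := Finset.sum_nonneg fun a _ => abs_nonneg _
  have hδ : 0 ≤ δ := by nlinarith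
  have htv : ∑ a ∈ S2, (π' a - μ a) ≤ Real.sqrt (δ / 2) := by
    have h1 : ∑ a ∈ S2, (π' a - μ a) ≤ (1/2) * ∑ a, |μ a - π' a| := by
      calc ∑ a ∈ S2, (π' a - μ a)
          ≤ ∑ a ∈ S2, (|μ a - π' a| + (π' a - μ a)) / 2 := by
            apply Finset.sum_le_sum
            intro a _
            have h : π' a - μ a ≤ |μ a - π' a| := by
              rw [abs_sub_comm]; exact le_abs_self _
            linarith
        _ ≤ ∑ a, (|μ a - π' a| + (π' a - μ a)) / 2 := by
            apply Finset.sum_le_sum_of_subset_of_nonneg (Finset.subset_univ _)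
            intro a _ _
            have h2 : -(π' a - μ a) ≤ |μ a - π' a| := by
              rw [abs_sub_comm, ← neg_sub]; exact neg_le_abs _
            linarith
        _ = (1/2) * ∑ a, |μ a - π' a| := by
            rw [← Finset.sum_div, Finset.sum_add_distrib, Finset.sum_sub_distrib,
              hμsum, hπsum]
            ring
    refine le_trans h1 ((Real.le_sqrt ?_ (by linarith)).mpr ?_)
    · positivity
    · nlinarith
  have hS2split : ∑ a ∈ S2, π' a = ∑ a ∈ S2, μ a + ∑ a ∈ S2, (π' a - μ a) := by
    rw [← Finset.sum_add_distrib]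
    exact Finset.sum_congr rfl fun a _ => by ring
  calc ∑ a ∈ Finset.univ.filter (fun a => τ ≤ |Real.log (π' a / μ a)|), π' a
      ≤ ∑ a ∈ S1, π' a + ∑ a ∈ S2, π' a := step1
    _ ≤ Real.exp (-τ) + (Real.exp (-τ) + Real.sqrt (δ / 2)) := by
        rw [hS2split]; gcongr
    _ = 2 * Real.exp (-τ) + Real.sqrt (δ / 2) := by ring
end

section
/- Let μ and π' be probability distributions on a finite action set with all probabilities positive, ρ'(a) = π'(a)/μ(a), ω(ρ; σ) = exp(-(log ρ)²/(2σ²)), and suppose D_KL(μ ∥ π') ≤ δ. Then for any τ > 0, E_{a∼π'}[1 - ω(ρ'(a); σ)] ≤ τ²/(2σ²) + 2e^{-τ} + √(δ/2). -/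
open Finset Real

noncomputable def gipoG (x : ℝ) : ℝ := Real.log x - (3/2) * ((x^2+4*x-5)/(x+2)^2)
noncomputable def gipoH (x : ℝ) : ℝ := x * Real.log x - x + 1 - 3*(x-1)^2/(2*(x+2))

lemma gipoG_hasDeriv {x : ℝ} (hx : 0 < x) :
    HasDerivAt gipoG ((x-1)^2*(x+8)/(x*(x+2)^3)) x := by
  have h2 : (0:ℝ) < x + 2 := by linarith
  have hnum : HasDerivAt (fun x : ℝ => x^2+4*x-5) (2*x+4) x := by
    have := ((hasDerivAt_pow 2 x).add ((hasDerivAt_id x).const_mul 4)).sub_const 5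
    refine this.congr_deriv ?_
    norm_num
  have hden : HasDerivAt (fun x : ℝ => (x+2)^2) (2*(x+2)) x := by
    have := ((hasDerivAt_id x).add_const 2).pow 2
    refine this.congr_deriv ?_; simp only [id_eq]; ring
  have hdiv := hnum.div hden (by positivity)
  have := (Real.hasDerivAt_log hx.ne').sub (hdiv.const_mul (3/2))
  refine this.congr_deriv ?_
  field_simp
  ring

lemma gipoG_nonneg {x : ℝ} (hx : 1 ≤ x) : 0 ≤ gipoG x := by
  have hmono : MonotoneOn gipoG (Set.Ioi 0) := by
    apply monotoneOn_of_deriv_nonneg (convex_Ioi 0)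
    · exact fun y hy => ((gipoG_hasDeriv hy).continuousAt).continuousWithinAt
    · intro y hy
      rw [interior_Ioi] at hy
      exact ((gipoG_hasDeriv hy).differentiableAt).differentiableWithinAt
    · intro y hy
      rw [interior_Ioi] at hy
      rw [(gipoG_hasDeriv hy).deriv]
      have : (0:ℝ) < y := hy
      positivity
  have h1 : gipoG 1 = 0 := by simp [gipoG]; norm_num
  have := hmono (Set.mem_Ioi.2 one_pos) (Set.mem_Ioi.2 (by linarith)) hx
  linarith [this, h1.symm ▸ this]

lemma gipoG_nonpos {x : ℝ} (hx0 : 0 < x) (hx : x ≤ 1) : gipoG x ≤ 0 := by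
  have hmono : MonotoneOn gipoG (Set.Ioi 0) := by
    apply monotoneOn_of_deriv_nonneg (convex_Ioi 0)
    · exact fun y hy => ((gipoG_hasDeriv hy).continuousAt).continuousWithinAt
    · intro y hy
      rw [interior_Ioi] at hy
      exact ((gipoG_hasDeriv hy).differentiableAt).differentiableWithinAt
    · intro y hy
      rw [interior_Ioi] at hy
      rw [(gipoG_hasDeriv hy).deriv]
      have : (0:ℝ) < y := hy
      positivity
  have h1 : gipoG 1 = 0 := by simp [gipoG]; norm_num
  have := hmono (Set.mem_Ioi.2 hx0) (Set.mem_Ioi.2 one_pos) hx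
  linarith

lemma gipoH_hasDeriv {x : ℝ} (hx : 0 < x) : HasDerivAt gipoH (gipoG x) x := by
  have h2 : (0:ℝ) < x + 2 := by linarith
  have hxl : HasDerivAt (fun x : ℝ => x * Real.log x) (1 * Real.log x + x * x⁻¹) x :=
    (hasDerivAt_id x).mul (Real.hasDerivAt_log hx.ne')
  have hnum : HasDerivAt (fun x : ℝ => 3*(x-1)^2) (3*(2*(x-1))) x := by
    have := (((hasDerivAt_id x).sub_const 1).pow 2).const_mul 3
    refine this.congr_deriv ?_; simp only [id_eq]; ring
  have hden : HasDerivAt (fun x : ℝ => 2*(x+2)) 2 x := by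
    have := ((hasDerivAt_id x).add_const 2).const_mul 2
    refine this.congr_deriv ?_
    norm_num
  have hdiv := hnum.div hden (by positivity)
  have := (((hxl.sub (hasDerivAt_id x)).add_const 1).sub hdiv)
  refine this.congr_deriv ?_
  unfold gipoG
  field_simp
  ring

lemma gipoH_nonneg {x : ℝ} (hx : 0 < x) : 0 ≤ gipoH x := by
  have hH1 : gipoH 1 = 0 := by simp [gipoH]
  rcases le_or_gt 1 x with h | h
  · have hmono : MonotoneOn gipoH (Set.Ici 1) := by
      apply monotoneOn_of_deriv_nonneg (convex_Ici 1)
      · intro y hy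
        have hy0 : (0:ℝ) < y := lt_of_lt_of_le one_pos hy
        exact ((gipoH_hasDeriv hy0).continuousAt).continuousWithinAt
      · intro y hy
        rw [interior_Ici] at hy
        have hy0 : (0:ℝ) < y := lt_trans one_pos hy
        exact ((gipoH_hasDeriv hy0).differentiableAt).differentiableWithinAt
      · intro y hy
        rw [interior_Ici] at hy
        have hy0 : (0:ℝ) < y := lt_trans one_pos hy
        rw [(gipoH_hasDeriv hy0).deriv]
        exact gipoG_nonneg (le_of_lt hy)
    have := hmono (Set.mem_Ici.2 le_rfl) (Set.mem_Ici.2 h) h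
    linarith
  · have hanti : AntitoneOn gipoH (Set.Ioc 0 1) := by
      apply antitoneOn_of_deriv_nonpos (convex_Ioc 0 1)
      · intro y hy
        exact ((gipoH_hasDeriv hy.1).continuousAt).continuousWithinAt
      · intro y hy
        rw [interior_Ioc] at hy
        exact ((gipoH_hasDeriv hy.1).differentiableAt).differentiableWithinAt
      · intro y hy
        rw [interior_Ioc] at hy
        rw [(gipoH_hasDeriv hy.1).deriv]
        exact gipoG_nonpos hy.1 (le_of_lt hy.2)
    have := hanti (Set.mem_Ioc.2 ⟨hx, le_of_lt h⟩) (Set.mem_Ioc.2 ⟨one_pos, le_rfl⟩) (le_of_lt h)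
    linarith

lemma gipo_key {x : ℝ} (hx : 0 < x) :
    3*(x-1)^2/(2*(x+2)) ≤ x * Real.log x - x + 1 := by
  have := gipoH_nonneg hx
  unfold gipoH at this
  linarith

lemma gipo_pinsker {A : Type*} [Fintype A]
    (μ π' : A → ℝ) (hμpos : ∀ a, 0 < μ a) (hπpos : ∀ a, 0 < π' a)
    (hμsum : ∑ a, μ a = 1) (hπsum : ∑ a, π' a = 1)
    (δ : ℝ) (hKL : ∑ a, μ a * Real.log (μ a / π' a) ≤ δ) :
    ∑ a, |μ a - π' a| ≤ Real.sqrt (2 * δ) := by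
  set f : A → ℝ := fun a => 3*(μ a - π' a)^2 / (2*(μ a + 2*π' a)) with hf
  set g : A → ℝ := fun a => 2*(μ a + 2*π' a)/3 with hg
  have hfnn : ∀ a, 0 ≤ f a := fun a => by
    have := hμpos a; have := hπpos a; rw [hf]; positivity
  have hgnn : ∀ a, 0 ≤ g a := fun a => by
    have := hμpos a; have := hπpos a; rw [hg]; positivity
  have habs : ∀ a, |μ a - π' a| = Real.sqrt (f a) * Real.sqrt (g a) := by
    intro a
    rw [← Real.sqrt_mul (hfnn a)]
    have hd : (0:ℝ) < μ a + 2*π' a := by linarith [hμpos a, hπpos a]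
    have hfg : f a * g a = (μ a - π' a)^2 := by
      rw [hf, hg]; field_simp; rw [mul_div_assoc, div_self (ne_of_gt (by linarith)), mul_one]
    rw [hfg, Real.sqrt_sq_eq_abs]
  have hfs : ∑ a, f a ≤ δ := by
    calc ∑ a, f a ≤ ∑ a, (μ a * Real.log (μ a / π' a) - μ a + π' a) := by
          apply Finset.sum_le_sum
          intro a _
          have hπ := hπpos a
          have hμ := hμpos a
          have hx : 0 < μ a / π' a := div_pos hμ hπ
          have hkey := gipo_key hx
          have hmul := mul_le_mul_of_nonneg_left hkey hπ.le
          have h1 : π' a * (3*(μ a / π' a - 1)^2/(2*(μ a / π' a + 2))) = f a := by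
            rw [hf]; field_simp
          have h2 : π' a * ((μ a / π' a) * Real.log (μ a / π' a) - μ a / π' a + 1)
              = μ a * Real.log (μ a / π' a) - μ a + π' a := by
            field_simp
          rw [h1, h2] at hmul
          exact hmul
      _ = (∑ a, μ a * Real.log (μ a / π' a)) - (∑ a, μ a) + (∑ a, π' a) := by
          rw [Finset.sum_add_distrib, Finset.sum_sub_distrib]
      _ ≤ δ := by rw [hμsum, hπsum]; linarith
  have hδ0 : 0 ≤ δ := le_trans (Finset.sum_nonneg fun a _ => hfnn a) hfs
  have hgs : ∑ a, g a = 2 := by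
    have : ∑ a, g a = 2*((∑ a, μ a) + 2*(∑ a, π' a))/3 := by
      rw [hg, ← Finset.sum_div, ← Finset.mul_sum, Finset.sum_add_distrib, ← Finset.mul_sum]
    rw [this, hμsum, hπsum]; norm_num
  calc ∑ a, |μ a - π' a| = ∑ a, Real.sqrt (f a) * Real.sqrt (g a) :=
        Finset.sum_congr rfl fun a _ => habs a
    _ ≤ Real.sqrt (∑ a, f a) * Real.sqrt (∑ a, g a) :=
        Real.sum_sqrt_mul_sqrt_le _ hfnn hgnn
    _ ≤ Real.sqrt δ * Real.sqrt 2 := by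
        rw [hgs]
        exact mul_le_mul_of_nonneg_right (Real.sqrt_le_sqrt hfs) (Real.sqrt_nonneg 2)
    _ = Real.sqrt (2 * δ) := by
        rw [mul_comm, ← Real.sqrt_mul (by norm_num : (0:ℝ) ≤ 2)]

theorem gipo_lemma1 {A : Type*} [Fintype A]
    (μ π' : A → ℝ) (hμpos : ∀ a, 0 < μ a) (hπpos : ∀ a, 0 < π' a)
    (hμsum : ∑ a, μ a = 1) (hπsum : ∑ a, π' a = 1)
    (σ : ℝ) (hσ : 0 < σ)
    (δ : ℝ) (hKL : ∑ a, μ a * Real.log (μ a / π' a) ≤ δ)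
    (τ : ℝ) (hτ : 0 < τ) :
    ∑ a, π' a * (1 - Real.exp (-(Real.log (π' a / μ a))^2 / (2 * σ^2)))
      ≤ τ^2 / (2 * σ^2) + 2 * Real.exp (-τ) + Real.sqrt (δ / 2) := by
  classical
  have hσ2 : (0:ℝ) < 2 * σ^2 := by positivity
  set L : A → ℝ := fun a => Real.log (π' a / μ a) with hL
  set c : ℝ := τ^2 / (2 * σ^2) with hc
  have hc0 : 0 ≤ c := by rw [hc]; positivity
  -- pointwise bound
  have hpt : ∀ a, π' a * (1 - Real.exp (-(L a)^2 / (2 * σ^2)))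
      ≤ π' a * c + (if τ ≤ |L a| then π' a else 0) := by
    intro a
    have hπ := (hπpos a).le
    by_cases h : τ ≤ |L a|
    · rw [if_pos h]
      have h1 : 1 - Real.exp (-(L a)^2 / (2 * σ^2)) ≤ 1 := by
        have := Real.exp_nonneg (-(L a)^2 / (2 * σ^2)); linarith
      nlinarith [mul_nonneg hπ hc0]
    · rw [if_neg h]
      push_neg at h
      have h2 : (L a)^2 ≤ τ^2 := by
        nlinarith [sq_abs (L a), abs_nonneg (L a)]
      have h3 : 1 - Real.exp (-(L a)^2 / (2 * σ^2)) ≤ (L a)^2 / (2 * σ^2) := by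
        have := Real.add_one_le_exp (-(L a)^2 / (2 * σ^2))
        have hnd : -(L a)^2 / (2 * σ^2) = -((L a)^2 / (2 * σ^2)) := neg_div _ _
        linarith
      have h4 : (L a)^2 / (2 * σ^2) ≤ c := by
        rw [hc]; gcongr
      have := mul_le_mul_of_nonneg_left (h3.trans h4) hπ
      linarith
  -- tail set bounds
  set Sp : Finset A := Finset.univ.filter (fun a => τ ≤ L a) with hSp
  set Sm : Finset A := Finset.univ.filter (fun a => L a ≤ -τ) with hSm
  have hSm_bound : ∑ a ∈ Sm, π' a ≤ Real.exp (-τ) := by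
    calc ∑ a ∈ Sm, π' a ≤ ∑ a ∈ Sm, Real.exp (-τ) * μ a := by
          apply Finset.sum_le_sum
          intro a ha
          have hla : L a ≤ -τ := (Finset.mem_filter.1 ha).2
          have hratio : π' a / μ a ≤ Real.exp (-τ) := by
            rw [← Real.log_le_iff_le_exp (div_pos (hπpos a) (hμpos a))]
            exact hla
          have := (div_le_iff₀ (hμpos a)).1 hratio
          linarith [this]
      _ = Real.exp (-τ) * ∑ a ∈ Sm, μ a := by rw [Finset.mul_sum]
      _ ≤ Real.exp (-τ) * 1 := by
          apply mul_le_mul_of_nonneg_left _ (Real.exp_nonneg _)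
          rw [← hμsum]
          exact Finset.sum_le_sum_of_subset_of_nonneg (Finset.subset_univ _)
            (fun a _ _ => (hμpos a).le)
      _ = Real.exp (-τ) := mul_one _
  have hSp_bound : ∑ a ∈ Sp, π' a ≤ Real.exp (-τ) + Real.sqrt (δ / 2) := by
    have hmu_le : ∀ a ∈ Sp, μ a ≤ Real.exp (-τ) * π' a := by
      intro a ha
      have hla : τ ≤ L a := (Finset.mem_filter.1 ha).2
      have hratio : Real.exp τ ≤ π' a / μ a := by
        rw [← Real.le_log_iff_exp_le (div_pos (hπpos a) (hμpos a))]
        exact hla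
      have h1 := (le_div_iff₀ (hμpos a)).1 hratio
      have h2 := Real.exp_pos τ
      rw [Real.exp_neg]
      rw [inv_mul_eq_div, le_div_iff₀ h2]
      linarith
    have hμpart : ∑ a ∈ Sp, μ a ≤ Real.exp (-τ) := by
      calc ∑ a ∈ Sp, μ a ≤ ∑ a ∈ Sp, Real.exp (-τ) * π' a := Finset.sum_le_sum hmu_le
        _ = Real.exp (-τ) * ∑ a ∈ Sp, π' a := by rw [Finset.mul_sum]
        _ ≤ Real.exp (-τ) * 1 := by
            apply mul_le_mul_of_nonneg_left _ (Real.exp_nonneg _)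
            rw [← hπsum]
            exact Finset.sum_le_sum_of_subset_of_nonneg (Finset.subset_univ _)
              (fun a _ _ => (hπpos a).le)
        _ = Real.exp (-τ) := mul_one _
    have hdiff : ∑ a ∈ Sp, (π' a - μ a) ≤ Real.sqrt (δ / 2) := by
      have htot : ∑ a, (π' a - μ a) = 0 := by
        rw [Finset.sum_sub_distrib, hπsum, hμsum]; ring
      have hsplit := Finset.sum_filter_add_sum_filter_not Finset.univ
        (fun a => τ ≤ L a) (fun a => π' a - μ a)
      have habs1 : ∑ a ∈ Sp, (π' a - μ a) ≤ ∑ a ∈ Sp, |μ a - π' a| :=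
        Finset.sum_le_sum fun a _ => by rw [abs_sub_comm]; exact le_abs_self _
      have habs2 : - ∑ a ∈ Finset.univ.filter (fun a => ¬ τ ≤ L a), (π' a - μ a)
          ≤ ∑ a ∈ Finset.univ.filter (fun a => ¬ τ ≤ L a), |μ a - π' a| := by
        rw [← Finset.sum_neg_distrib]
        exact Finset.sum_le_sum fun a _ => by
          rw [neg_sub]; exact le_abs_self _
      have habs_tot : ∑ a ∈ Sp, |μ a - π' a|
          + ∑ a ∈ Finset.univ.filter (fun a => ¬ τ ≤ L a), |μ a - π' a|
          = ∑ a, |μ a - π' a| := by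
        rw [hSp]
        exact Finset.sum_filter_add_sum_filter_not _ _ _
      have hpin := gipo_pinsker μ π' hμpos hπpos hμsum hπsum δ hKL
      have hsqrt : Real.sqrt (2 * δ) = 2 * Real.sqrt (δ / 2) := by
        rw [show (2:ℝ) * δ = 4 * (δ / 2) by ring,
          Real.sqrt_mul (by norm_num : (0:ℝ) ≤ 4),
          show (4:ℝ) = 2^2 by norm_num, Real.sqrt_sq (by norm_num : (0:ℝ) ≤ 2)]
      have h2d : 2 * ∑ a ∈ Sp, (π' a - μ a) ≤ ∑ a, |μ a - π' a| := by
        have hneg : ∑ a ∈ Sp, (π' a - μ a)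
            = - ∑ a ∈ Finset.univ.filter (fun a => ¬ τ ≤ L a), (π' a - μ a) := by
          rw [hSp] at *
          linarith [hsplit, htot]
        linarith [habs1, habs2, habs_tot, hneg]
      rw [hsqrt] at hpin
      linarith
    have : ∑ a ∈ Sp, π' a = ∑ a ∈ Sp, μ a + ∑ a ∈ Sp, (π' a - μ a) := by
      rw [← Finset.sum_add_distrib]
      exact Finset.sum_congr rfl fun a _ => by ring
    rw [this]
    linarith
  -- combine
  have hsum1 : ∑ a, π' a * (1 - Real.exp (-(L a)^2 / (2 * σ^2)))
      ≤ ∑ a, (π' a * c + (if τ ≤ |L a| then π' a else 0)) :=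
    Finset.sum_le_sum fun a _ => hpt a
  have hsum2 : ∑ a, (π' a * c + (if τ ≤ |L a| then π' a else 0))
      = c + ∑ a ∈ Finset.univ.filter (fun a => τ ≤ |L a|), π' a := by
    rw [Finset.sum_add_distrib, ← Finset.sum_mul, hπsum, one_mul, Finset.sum_filter]
  have hsub : Finset.univ.filter (fun a => τ ≤ |L a|) ⊆ Sp ∪ Sm := by
    intro a ha
    have h := (Finset.mem_filter.1 ha).2
    rcases abs_cases (L a) with ⟨he, _⟩ | ⟨he, _⟩
    · exact Finset.mem_union_left _ (Finset.mem_filter.2 ⟨Finset.mem_univ a, by linarith⟩)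
    · exact Finset.mem_union_right _ (Finset.mem_filter.2 ⟨Finset.mem_univ a, by linarith⟩)
  have hdisj : Disjoint Sp Sm := by
    rw [Finset.disjoint_left]
    intro a ha hb
    have h1 : τ ≤ L a := (Finset.mem_filter.1 ha).2
    have h2 : L a ≤ -τ := (Finset.mem_filter.1 hb).2
    linarith
  have hfilter : ∑ a ∈ Finset.univ.filter (fun a => τ ≤ |L a|), π' a
      ≤ 2 * Real.exp (-τ) + Real.sqrt (δ / 2) := by
    calc ∑ a ∈ Finset.univ.filter (fun a => τ ≤ |L a|), π' a
        ≤ ∑ a ∈ Sp ∪ Sm, π' a :=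
          Finset.sum_le_sum_of_subset_of_nonneg hsub (fun a _ _ => (hπpos a).le)
      _ = ∑ a ∈ Sp, π' a + ∑ a ∈ Sm, π' a := Finset.sum_union hdisj
      _ ≤ 2 * Real.exp (-τ) + Real.sqrt (δ / 2) := by linarith
  calc ∑ a, π' a * (1 - Real.exp (-(L a)^2 / (2 * σ^2)))
      ≤ c + ∑ a ∈ Finset.univ.filter (fun a => τ ≤ |L a|), π' a := by
        rw [← hsum2]; exact hsum1
    _ ≤ c + (2 * Real.exp (-τ) + Real.sqrt (δ / 2)) := by linarith
    _ = τ^2 / (2 * σ^2) + 2 * Real.exp (-τ) + Real.sqrt (δ / 2) := by rw [hc]; ring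
end
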